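/- arXiv:1411.0821 — 3 statements merged into one kernel-verified Lean document; each statement's English description precedes it below -/
import Mathlib

section
/- The two formulations of hypercube 2-segmentation are equivalent: for vectors x₁,…,x_k ∈ {1,-1}^d, the maximum over pairs of centers c₁,c₂ ∈ {1,-1}^d of ∑_i max(agree(c₁,x_i), agree(c₂,x_i)) equals (kd + max over partitions (S, Sᶜ) of {1,…,k} of (‖∑_{i∈S} x_i‖₁ + ‖∑_{i∉S} x_i‖₁))/2. -/
/-- agreement count between two vectors in ℝ^d -/
noncomputable def agree {d : ℕ} (c x : Fin d → ℝ) : ℕ :=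
  (Finset.univ.filter (fun j => c j = x j)).card

lemma agree_eq {d : ℕ} (c x : Fin d → ℝ) (hc : ∀ j, c j = 1 ∨ c j = -1)
    (hx : ∀ j, x j = 1 ∨ x j = -1) :
    (agree c x : ℝ) = ((d : ℝ) + ∑ j, c j * x j) / 2 := by
  classical
  have h : ∀ j : Fin d, c j * x j = (if c j = x j then (2:ℝ) else 0) - 1 := by
    intro j
    rcases hc j with h1 | h1 <;> rcases hx j with h2 | h2 <;>
      simp [h1, h2] <;> norm_num
  rw [Finset.sum_congr rfl (fun j _ => h j), Finset.sum_sub_distrib]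
  rw [Finset.sum_ite, Finset.sum_const, Finset.sum_const, Finset.sum_const]
  simp only [agree, smul_eq_mul, mul_zero, add_zero, mul_one, nsmul_eq_mul]
  rw [Finset.card_univ, Fintype.card_fin]
  ring

lemma sum_agree {k d : ℕ} (x : Fin k → Fin d → ℝ)
    (hx : ∀ i j, x i j = 1 ∨ x i j = -1) (S : Finset (Fin k)) (c : Fin d → ℝ)
    (hc : ∀ j, c j = 1 ∨ c j = -1) :
    ∑ i ∈ S, (agree c (x i) : ℝ)
      = ((S.card * d : ℝ) + ∑ j, c j * ∑ i ∈ S, x i j) / 2 := by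
  have h1 : ∀ i ∈ S, (agree c (x i) : ℝ) = ((d:ℝ) + ∑ j, c j * x i j)/2 :=
    fun i _ => agree_eq c (x i) hc (hx i)
  calc ∑ i ∈ S, (agree c (x i):ℝ)
      = ∑ i ∈ S, ((d:ℝ) + ∑ j, c j * x i j)/2 := Finset.sum_congr rfl h1
    _ = ((S.card * d : ℝ) + ∑ i ∈ S, ∑ j, c j * x i j) / 2 := by
        rw [← Finset.sum_div, Finset.sum_add_distrib, Finset.sum_const, nsmul_eq_mul]
    _ = _ := by
        rw [Finset.sum_comm]
        congr 2
        exact Finset.sum_congr rfl fun j _ => (Finset.mul_sum _ _ _).symm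

lemma sum_agree_le {k d : ℕ} (x : Fin k → Fin d → ℝ)
    (hx : ∀ i j, x i j = 1 ∨ x i j = -1) (S : Finset (Fin k)) (c : Fin d → ℝ)
    (hc : ∀ j, c j = 1 ∨ c j = -1) :
    ∑ i ∈ S, (agree c (x i) : ℝ)
      ≤ ((S.card * d : ℝ) + ∑ j, |∑ i ∈ S, x i j|) / 2 := by
  rw [sum_agree x hx S c hc]
  gcongr ((_ + ?_)/2)
  apply Finset.sum_le_sum
  intro j _
  calc c j * ∑ i ∈ S, x i j ≤ |c j * ∑ i ∈ S, x i j| := le_abs_self _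
    _ = |∑ i ∈ S, x i j| := by
        rw [abs_mul]
        rcases hc j with h | h <;> simp [h]

lemma sum_agree_sign {k d : ℕ} (x : Fin k → Fin d → ℝ)
    (hx : ∀ i j, x i j = 1 ∨ x i j = -1) (S : Finset (Fin k)) :
    ∑ i ∈ S, (agree (fun j => if 0 ≤ ∑ i ∈ S, x i j then 1 else -1) (x i) : ℝ)
      = ((S.card * d : ℝ) + ∑ j, |∑ i ∈ S, x i j|) / 2 := by
  have hc : ∀ j, (if 0 ≤ ∑ i ∈ S, x i j then (1:ℝ) else -1) = 1 ∨
      (if 0 ≤ ∑ i ∈ S, x i j then (1:ℝ) else -1) = -1 := by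
    intro j; split <;> simp
  rw [sum_agree x hx S _ hc]
  congr 2
  apply Finset.sum_congr rfl
  intro j _
  split_ifs with h
  · rw [one_mul, abs_of_nonneg h]
  · rw [neg_one_mul, abs_of_neg (not_le.mp h)]

theorem h2s_formulations_equivalent (k d : ℕ) (x : Fin k → Fin d → ℝ)
    (hx : ∀ i j, x i j = 1 ∨ x i j = -1) (P : ℝ)
    (hP : IsGreatest {t : ℝ | ∃ S : Finset (Fin k),
        t = (∑ j, |∑ i ∈ S, x i j|) + ∑ j, |∑ i ∈ Sᶜ, x i j|} P) :
    IsGreatest {s : ℝ | ∃ c₁ c₂ : Fin d → ℝ,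
        (∀ j, c₁ j = 1 ∨ c₁ j = -1) ∧ (∀ j, c₂ j = 1 ∨ c₂ j = -1) ∧
        s = ∑ i, max (agree c₁ (x i) : ℝ) (agree c₂ (x i) : ℝ)}
      (((k * d : ℝ) + P) / 2) := by
  classical
  -- upper bound
  have hub : ∀ s ∈ {s : ℝ | ∃ c₁ c₂ : Fin d → ℝ,
        (∀ j, c₁ j = 1 ∨ c₁ j = -1) ∧ (∀ j, c₂ j = 1 ∨ c₂ j = -1) ∧
        s = ∑ i, max (agree c₁ (x i) : ℝ) (agree c₂ (x i) : ℝ)},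
      s ≤ ((k * d : ℝ) + P) / 2 := by
    rintro s ⟨c₁, c₂, h1, h2, rfl⟩
    set S : Finset (Fin k) :=
      Finset.univ.filter (fun i => (agree c₂ (x i) : ℝ) ≤ (agree c₁ (x i) : ℝ)) with hS
    have hsplit : ∑ i, max (agree c₁ (x i) : ℝ) (agree c₂ (x i) : ℝ)
        = ∑ i ∈ S, (agree c₁ (x i) : ℝ) + ∑ i ∈ Sᶜ, (agree c₂ (x i) : ℝ) := by
      rw [← Finset.sum_add_sum_compl S]
      congr 1
      · apply Finset.sum_congr rfl
        intro i hi
        rw [hS, Finset.mem_filter] at hi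
        exact max_eq_left hi.2
      · apply Finset.sum_congr rfl
        intro i hi
        rw [Finset.mem_compl, hS, Finset.mem_filter] at hi
        have := hi
        simp only [Finset.mem_univ, true_and] at this
        exact max_eq_right (le_of_not_ge this)
    rw [hsplit]
    have hcard : (S.card : ℝ) + (Sᶜ.card : ℝ) = k := by
      have := Finset.card_add_card_compl S
      rw [Fintype.card_fin] at this
      exact_mod_cast this
    have hPle : (∑ j, |∑ i ∈ S, x i j|) + ∑ j, |∑ i ∈ Sᶜ, x i j| ≤ P :=
      hP.2 ⟨S, rfl⟩
    calc ∑ i ∈ S, (agree c₁ (x i) : ℝ) + ∑ i ∈ Sᶜ, (agree c₂ (x i) : ℝ)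
        ≤ ((S.card * d : ℝ) + ∑ j, |∑ i ∈ S, x i j|) / 2
          + ((Sᶜ.card * d : ℝ) + ∑ j, |∑ i ∈ Sᶜ, x i j|) / 2 :=
          add_le_add (sum_agree_le x hx S c₁ h1) (sum_agree_le x hx Sᶜ c₂ h2)
      _ = ((k * d : ℝ) + ((∑ j, |∑ i ∈ S, x i j|) + ∑ j, |∑ i ∈ Sᶜ, x i j|)) / 2 := by
          field_simp
          nlinarith [hcard]
      _ ≤ ((k * d : ℝ) + P) / 2 := by linarith
  constructor
  · obtain ⟨S, hSP⟩ := hP.1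
    set c₁ : Fin d → ℝ := fun j => if 0 ≤ ∑ i ∈ S, x i j then 1 else -1 with hc₁
    set c₂ : Fin d → ℝ := fun j => if 0 ≤ ∑ i ∈ Sᶜ, x i j then 1 else -1 with hc₂
    have h1 : ∀ j, c₁ j = 1 ∨ c₁ j = -1 := by intro j; rw [hc₁]; dsimp; split <;> simp
    have h2 : ∀ j, c₂ j = 1 ∨ c₂ j = -1 := by intro j; rw [hc₂]; dsimp; split <;> simp
    refine ⟨c₁, c₂, h1, h2, ?_⟩
    have hle := hub _ ⟨c₁, c₂, h1, h2, rfl⟩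
    have hge : ((k * d : ℝ) + P) / 2
        ≤ ∑ i, max (agree c₁ (x i) : ℝ) (agree c₂ (x i) : ℝ) := by
      have hcard : (S.card : ℝ) + (Sᶜ.card : ℝ) = k := by
        have := Finset.card_add_card_compl S
        rw [Fintype.card_fin] at this
        exact_mod_cast this
      calc ((k * d : ℝ) + P) / 2
          = ((S.card * d : ℝ) + ∑ j, |∑ i ∈ S, x i j|) / 2
            + ((Sᶜ.card * d : ℝ) + ∑ j, |∑ i ∈ Sᶜ, x i j|) / 2 := by
            rw [hSP]; field_simp; nlinarith [hcard]
        _ = ∑ i ∈ S, (agree c₁ (x i) : ℝ) + ∑ i ∈ Sᶜ, (agree c₂ (x i) : ℝ) := by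
            rw [sum_agree_sign x hx S, sum_agree_sign x hx Sᶜ]
        _ ≤ ∑ i ∈ S, max (agree c₁ (x i) : ℝ) (agree c₂ (x i) : ℝ)
            + ∑ i ∈ Sᶜ, max (agree c₁ (x i) : ℝ) (agree c₂ (x i) : ℝ) :=
            add_le_add (Finset.sum_le_sum fun i _ => le_max_left _ _)
              (Finset.sum_le_sum fun i _ => le_max_right _ _)
        _ = ∑ i, max (agree c₁ (x i) : ℝ) (agree c₂ (x i) : ℝ) :=
            Finset.sum_add_sum_compl S _
    linarith
  · exact hub
end

section
/- In the reduction from max-cut, Yes instances give large H2S value: if G has a cut of size c, then the constructed H2S instance (with k = Mn vectors of dimension Mm built from monochromatic blocks for edge endpoints and Hadamard codewords for non-incident vertices) admits a partition into two clusters whose total ℓ1 value is at least c·(2M² − (n−2)·M^{3/2}). -/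
/-- The vector associated with the `j`-th copy of vertex `i` in the reduction:
coordinates are indexed by (edge, position in block). -/
noncomputable def redVec {n m M : ℕ} (head tail : Fin m → Fin n)
    (Had : Fin M → Fin M → ℝ) (i : Fin n) (j : Fin M) : Fin m × Fin M → ℝ :=
  fun p => if head p.1 = i then 1 else if tail p.1 = i then -1 else Had j p.2

/-- The H2S value of the partition (X, Xᶜ) of the constructed vectors. -/
noncomputable def h2sValue {n m M : ℕ} (head tail : Fin m → Fin n)
    (Had : Fin M → Fin M → ℝ) (X : Finset (Fin n × Fin M)) : ℝ :=
  (∑ p : Fin m × Fin M, |∑ v ∈ X, redVec head tail Had v.1 v.2 p|) +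
    ∑ p : Fin m × Fin M, |∑ v ∈ Xᶜ, redVec head tail Had v.1 v.2 p|

lemma abs_add_ge (A y : ℝ) : |A| - |y| ≤ |A + y| := by
  have := abs_sub_abs_le_abs_sub A (-y)
  simpa using this

lemma key_sum {n : ℕ} (T : Finset (Fin n)) (u w : Fin n) (a b x : ℝ)
    (hu : u ∈ T) (hw : w ∉ T) :
    ∑ i ∈ T, (if u = i then a else if w = i then b else x)
      = a + ((T.card : ℝ) - 1) * x := by
  rw [← Finset.add_sum_erase T _ hu]
  have hcong : ∀ i ∈ T.erase u, (if u = i then a else if w = i then b else x) = x := by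
    intro i hi
    have h1 : u ≠ i := fun h => (Finset.ne_of_mem_erase hi) h.symm
    have h2 : w ≠ i := by rintro rfl; exact hw (Finset.mem_of_mem_erase hi)
    simp [h1, h2]
  have hc : 1 ≤ T.card := Finset.card_pos.mpr ⟨u, hu⟩
  rw [Finset.sum_congr rfl hcong, Finset.sum_const, Finset.card_erase_of_mem hu,
    if_pos rfl, nsmul_eq_mul, Nat.cast_sub hc]
  push_cast
  ring

lemma key_sum' {n : ℕ} (T : Finset (Fin n)) (u w : Fin n) (a b x : ℝ)
    (hu : u ∉ T) (hw : w ∈ T) (_huw : u ≠ w) :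
    ∑ i ∈ T, (if u = i then a else if w = i then b else x)
      = b + ((T.card : ℝ) - 1) * x := by
  have := key_sum T w u b a x hw hu
  rw [← this]
  refine Finset.sum_congr rfl fun i hi => ?_
  have h1 : u ≠ i := by rintro rfl; exact hu hi
  simp [h1]

theorem yes_instance_bound (n m M c : ℕ) (head tail : Fin m → Fin n)
    (hsimple : ∀ e, head e ≠ tail e)
    (Had : Fin M → Fin M → ℝ)
    (hHpm : ∀ j p, Had j p = 1 ∨ Had j p = -1)
    (hHorth : ∀ j k, j ≠ k → ∑ p, Had j p * Had k p = 0)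
    (S : Finset (Fin n))
    (hcut : (Finset.univ.filter
        (fun e : Fin m => ¬ (head e ∈ S ↔ tail e ∈ S))).card = c) :
    ∃ X : Finset (Fin n × Fin M),
      (c : ℝ) * (2 * (M : ℝ) ^ 2 - ((n : ℝ) - 2) * (M : ℝ) ^ ((3 : ℝ) / 2))
        ≤ h2sValue head tail Had X := by
  classical
  set K : ℝ := 2 * (M : ℝ) ^ 2 - ((n : ℝ) - 2) * (M : ℝ) ^ ((3 : ℝ) / 2) with hK
  set X : Finset (Fin n × Fin M) := S ×ˢ Finset.univ with hXdef
  refine ⟨X, ?_⟩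
  set cut : Finset (Fin m) :=
    Finset.univ.filter (fun e : Fin m => ¬ (head e ∈ S ↔ tail e ∈ S)) with hcutdef
  have hXc : Xᶜ = Sᶜ ×ˢ (Finset.univ : Finset (Fin M)) := by
    ext ⟨i, j⟩; simp [hXdef]
  set h : Fin M → ℝ := fun t => ∑ j, Had j t with hh
  -- per-vertex block sums
  have hvert : ∀ (i : Fin n) (e : Fin m) (t : Fin M),
      ∑ j : Fin M, redVec head tail Had i j (e, t)
      = if head e = i then (M : ℝ) else if tail e = i then -(M : ℝ) else h t := by
    intro i e t
    by_cases h1 : head e = i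
    · simp [redVec, h1]
    · by_cases h2 : tail e = i
      · simp [redVec, h1, h2]
      · simp [redVec, h1, h2, hh]
  have hsumT : ∀ (T : Finset (Fin n)) (e : Fin m) (t : Fin M),
      ∑ v ∈ T ×ˢ (Finset.univ : Finset (Fin M)), redVec head tail Had v.1 v.2 (e, t)
      = ∑ i ∈ T, (if head e = i then (M : ℝ) else if tail e = i then -(M : ℝ) else h t) := by
    intro T e t
    rw [Finset.sum_product]
    exact Finset.sum_congr rfl fun i _ => hvert i e t
  -- Hadamard facts
  have hself : ∀ j, ∑ t, Had j t * Had j t = (M : ℝ) := by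
    intro j
    have he : ∀ t, Had j t * Had j t = 1 := by
      intro t; rcases hHpm j t with h | h <;> rw [h] <;> norm_num
    simp [he]
  have hsq : ∑ t, (h t) ^ 2 = (M : ℝ) ^ 2 := by
    have he : ∀ t, (h t) ^ 2 = ∑ j, ∑ k, Had j t * Had k t := by
      intro t; rw [hh]; simp [sq, Finset.sum_mul_sum]
    rw [Finset.sum_congr rfl fun t _ => he t]
    calc ∑ t : Fin M, ∑ j, ∑ k, Had j t * Had k t
        = ∑ j : Fin M, ∑ k : Fin M, ∑ t : Fin M, Had j t * Had k t := by
          rw [Finset.sum_comm]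
          exact Finset.sum_congr rfl fun j _ => Finset.sum_comm
      _ = ∑ j : Fin M, (M : ℝ) := by
          refine Finset.sum_congr rfl fun j _ => ?_
          rw [Finset.sum_eq_single j (fun k _ hk => hHorth j k (Ne.symm hk)) (by simp)]
          exact hself j
      _ = (M : ℝ) ^ 2 := by simp [sq]
  have hH0 : 0 ≤ ∑ t, |h t| := Finset.sum_nonneg fun t _ => abs_nonneg _
  have hHle : ∑ t, |h t| ≤ (M : ℝ) ^ ((3 : ℝ) / 2) := by
    have h1 : (∑ t, |h t|) ^ 2 ≤ (M : ℝ) * (M : ℝ) ^ 2 := by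
      have := sq_sum_le_card_mul_sum_sq (s := (Finset.univ : Finset (Fin M)))
        (f := fun t => |h t|)
      simpa [hsq, sq_abs] using this
    have h2 : ∑ t, |h t| ≤ Real.sqrt ((M : ℝ) ^ 3) := by
      rw [← Real.sqrt_sq hH0]
      apply Real.sqrt_le_sqrt
      calc (∑ t, |h t|) ^ 2 ≤ (M : ℝ) * (M : ℝ) ^ 2 := h1
        _ = (M : ℝ) ^ 3 := by ring
    calc ∑ t, |h t| ≤ Real.sqrt ((M : ℝ) ^ 3) := h2
      _ = (M : ℝ) ^ ((3 : ℝ) / 2) := by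
        rw [Real.sqrt_eq_rpow, ← Real.rpow_natCast (M : ℝ) 3,
          ← Real.rpow_mul (by positivity)]
        norm_num
  -- total value as double sum
  have hval : h2sValue head tail Had X
      = ∑ e : Fin m, ∑ t : Fin M,
          (|∑ v ∈ X, redVec head tail Had v.1 v.2 (e, t)|
            + |∑ v ∈ Xᶜ, redVec head tail Had v.1 v.2 (e, t)|) := by
    unfold h2sValue
    rw [← Finset.sum_add_distrib, Fintype.sum_prod_type]
  -- per cut edge bound
  have hedge : ∀ e ∈ cut, (2 : ℝ) * (M : ℝ) ^ 2 - ((n : ℝ) - 2) * (M : ℝ) ^ ((3 : ℝ) / 2)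
      ≤ ∑ t : Fin M,
          (|∑ v ∈ X, redVec head tail Had v.1 v.2 (e, t)|
            + |∑ v ∈ Xᶜ, redVec head tail Had v.1 v.2 (e, t)|) := by
    intro e he
    have hcutm : ¬ (head e ∈ S ↔ tail e ∈ S) := by
      simpa [hcutdef] using he
    have hn2 : (2 : ℝ) ≤ (n : ℝ) := by
      have : Nontrivial (Fin n) := ⟨head e, tail e, hsimple e⟩
      have := Fintype.one_lt_card (α := Fin n)
      simp only [Fintype.card_fin] at this
      exact_mod_cast this
    have hcards : (S.card : ℝ) + (Sᶜ.card : ℝ) = (n : ℝ) := by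
      have := Finset.card_add_card_compl S
      rw [Fintype.card_fin] at this
      exact_mod_cast this
    have hScard : S.Nonempty ∨ True := Or.inr trivial
    -- pointwise bound
    have hpt : ∀ t : Fin M,
        2 * (M : ℝ) - ((n : ℝ) - 2) * |h t|
          ≤ |∑ v ∈ X, redVec head tail Had v.1 v.2 (e, t)|
            + |∑ v ∈ Xᶜ, redVec head tail Had v.1 v.2 (e, t)| := by
      intro t
      have ha : (0 : ℝ) ≤ |h t| := abs_nonneg _
      by_cases hS : head e ∈ S
      · have hT : tail e ∉ S := fun h => hcutm ⟨fun _ => h, fun _ => hS⟩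
        have e1 : ∑ v ∈ X, redVec head tail Had v.1 v.2 (e, t)
            = (M : ℝ) + ((S.card : ℝ) - 1) * h t := by
          rw [hXdef, hsumT, key_sum S (head e) (tail e) _ _ _ hS hT]
        have e2 : ∑ v ∈ Xᶜ, redVec head tail Had v.1 v.2 (e, t)
            = -(M : ℝ) + ((Sᶜ.card : ℝ) - 1) * h t := by
          rw [hXc, hsumT, key_sum' Sᶜ (head e) (tail e) _ _ _ (by simpa using hS)
            (by simpa using hT) (hsimple e)]
        have b1 : (M : ℝ) - ((S.card : ℝ) - 1) * |h t|
            ≤ |∑ v ∈ X, redVec head tail Had v.1 v.2 (e, t)| := by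
          rw [e1]
          have := abs_add_ge (M : ℝ) (((S.card : ℝ) - 1) * h t)
          have hcS : (1 : ℝ) ≤ (S.card : ℝ) := by
            exact_mod_cast Finset.card_pos.mpr ⟨head e, hS⟩
          rw [abs_mul, abs_of_nonneg (by linarith : (0:ℝ) ≤ (S.card : ℝ) - 1),
            abs_of_nonneg (by positivity : (0:ℝ) ≤ (M:ℝ))] at this
          exact this
        have b2 : (M : ℝ) - ((Sᶜ.card : ℝ) - 1) * |h t|
            ≤ |∑ v ∈ Xᶜ, redVec head tail Had v.1 v.2 (e, t)| := by
          rw [e2]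
          have := abs_add_ge (-(M : ℝ)) (((Sᶜ.card : ℝ) - 1) * h t)
          have hcS : (1 : ℝ) ≤ (Sᶜ.card : ℝ) := by
            exact_mod_cast Finset.card_pos.mpr ⟨tail e, by simpa using hT⟩
          rw [abs_mul, abs_of_nonneg (by linarith : (0:ℝ) ≤ (Sᶜ.card : ℝ) - 1),
            abs_neg, abs_of_nonneg (by positivity : (0:ℝ) ≤ (M:ℝ))] at this
          exact this
        nlinarith [b1, b2]
      · have hT : tail e ∈ S := by
          by_contra hT
          exact hcutm ⟨fun h => absurd h hS, fun h => absurd h hT⟩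
        have e1 : ∑ v ∈ X, redVec head tail Had v.1 v.2 (e, t)
            = -(M : ℝ) + ((S.card : ℝ) - 1) * h t := by
          rw [hXdef, hsumT, key_sum' S (head e) (tail e) _ _ _ hS hT (hsimple e)]
        have e2 : ∑ v ∈ Xᶜ, redVec head tail Had v.1 v.2 (e, t)
            = (M : ℝ) + ((Sᶜ.card : ℝ) - 1) * h t := by
          rw [hXc, hsumT, key_sum Sᶜ (head e) (tail e) _ _ _ (by simpa using hS)
            (by simpa using hT)]
        have b1 : (M : ℝ) - ((S.card : ℝ) - 1) * |h t|
            ≤ |∑ v ∈ X, redVec head tail Had v.1 v.2 (e, t)| := by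
          rw [e1]
          have := abs_add_ge (-(M : ℝ)) (((S.card : ℝ) - 1) * h t)
          have hcS : (1 : ℝ) ≤ (S.card : ℝ) := by
            exact_mod_cast Finset.card_pos.mpr ⟨tail e, hT⟩
          rw [abs_mul, abs_of_nonneg (by linarith : (0:ℝ) ≤ (S.card : ℝ) - 1),
            abs_neg, abs_of_nonneg (by positivity : (0:ℝ) ≤ (M:ℝ))] at this
          exact this
        have b2 : (M : ℝ) - ((Sᶜ.card : ℝ) - 1) * |h t|
            ≤ |∑ v ∈ Xᶜ, redVec head tail Had v.1 v.2 (e, t)| := by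
          rw [e2]
          have := abs_add_ge ((M : ℝ)) (((Sᶜ.card : ℝ) - 1) * h t)
          have hcS : (1 : ℝ) ≤ (Sᶜ.card : ℝ) := by
            exact_mod_cast Finset.card_pos.mpr ⟨head e, by simpa using hS⟩
          rw [abs_mul, abs_of_nonneg (by linarith : (0:ℝ) ≤ (Sᶜ.card : ℝ) - 1),
            abs_of_nonneg (by positivity : (0:ℝ) ≤ (M:ℝ))] at this
          exact this
        nlinarith [b1, b2]
    calc (2 : ℝ) * (M : ℝ) ^ 2 - ((n : ℝ) - 2) * (M : ℝ) ^ ((3 : ℝ) / 2)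
        ≤ 2 * (M : ℝ) ^ 2 - ((n : ℝ) - 2) * ∑ t, |h t| := by
          have : ((n : ℝ) - 2) * ∑ t, |h t| ≤ ((n : ℝ) - 2) * (M : ℝ) ^ ((3 : ℝ) / 2) :=
            mul_le_mul_of_nonneg_left hHle (by linarith)
          linarith
      _ = ∑ t : Fin M, (2 * (M : ℝ) - ((n : ℝ) - 2) * |h t|) := by
          rw [Finset.sum_sub_distrib, Finset.sum_const, ← Finset.mul_sum]
          simp [sq]
          ring
      _ ≤ _ := Finset.sum_le_sum fun t _ => hpt t
  -- put it together
  have hc0 : (c : ℝ) * K ≤ ∑ e ∈ cut, ((2 : ℝ) * (M : ℝ) ^ 2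
      - ((n : ℝ) - 2) * (M : ℝ) ^ ((3 : ℝ) / 2)) := by
    rw [Finset.sum_const, hcut, nsmul_eq_mul, hK]
  calc (c : ℝ) * K
      ≤ ∑ e ∈ cut, ((2 : ℝ) * (M : ℝ) ^ 2
          - ((n : ℝ) - 2) * (M : ℝ) ^ ((3 : ℝ) / 2)) := hc0
    _ ≤ ∑ e ∈ cut, ∑ t : Fin M,
          (|∑ v ∈ X, redVec head tail Had v.1 v.2 (e, t)|
            + |∑ v ∈ Xᶜ, redVec head tail Had v.1 v.2 (e, t)|) :=
        Finset.sum_le_sum hedge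
    _ ≤ ∑ e : Fin m, ∑ t : Fin M,
          (|∑ v ∈ X, redVec head tail Had v.1 v.2 (e, t)|
            + |∑ v ∈ Xᶜ, redVec head tail Had v.1 v.2 (e, t)|) := by
        refine Finset.sum_le_sum_of_subset_of_nonneg (Finset.subset_univ _) ?_
        intro e _ _
        exact Finset.sum_nonneg fun t _ => add_nonneg (abs_nonneg _) (abs_nonneg _)
    _ = h2sValue head tail Had X := hval.symm
end

section
/- In the reduction from max-cut, No instances give small H2S value: if every cut of G has size at most c−1, then every partition of the constructed vectors into two clusters has total ℓ1 value at most 2M²(c−1) + √2·(n−2)·m·M^{3/2}. -/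
/-!
On the block of an edge `e = (h, t)`, the vectors of a cluster `Y` sum to
`(a_Y h - a_Y t) • 1 + ∑ j, c_j • H_j`, where `a_Y i` counts the copies of `i` in `Y` and `c_j`
the vectors of `Y` that carry the codeword `H_j` there. Cauchy–Schwarz and the orthogonality of
the codewords bound the ℓ₁-norm of the codeword part by `M ‖c‖₂`, and since the counts of the two
clusters add up to `n - 2`, both clusters together contribute at most `√2 (n - 2) M^{3/2}` per
edge. The monochromatic parts contribute `2M |a_X h - a_X t|`; thresholding `a_X ∈ [0, M]` at
`k = 0, …, M - 1` writes the sum of these over all edges as a sum of `M` cut sizes, each at most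
`c - 1`.
-/

open Finset

theorem sum_abs_le_sqrt_card_mul_sum_sq {ι : Type*} (s : Finset ι) (f : ι → ℝ) :
    ∑ i ∈ s, |f i| ≤ √(#s * ∑ i ∈ s, f i ^ 2) :=
  Real.le_sqrt_of_sq_le <| by simpa only [sq_abs] using sq_sum_le_card_mul_sum_sq (f := (|f ·|))

theorem sum_sq_sum_mul_eq_of_orthogonal {ι κ : Type*} [Fintype ι] [Fintype κ]
    (H : ι → κ → ℝ) {N : ℝ} (hnorm : ∀ j, ∑ p, H j p * H j p = N)
    (horth : ∀ j k, j ≠ k → ∑ p, H j p * H k p = 0) (c : ι → ℝ) :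
    ∑ p, (∑ j, c j * H j p) ^ 2 = N * ∑ j, c j ^ 2 := by
  classical
  have hinner : ∀ j k, ∑ p, H j p * H k p = if j = k then N else 0 := by
    intro j k
    split_ifs with h
    · exact h ▸ hnorm j
    · exact horth j k h
  calc ∑ p, (∑ j, c j * H j p) ^ 2 = ∑ j, ∑ k, c j * c k * ∑ p, H j p * H k p := by
        simp_rw [sq, sum_mul_sum, mul_sum]
        rw [sum_comm]
        refine sum_congr rfl fun j _ => ?_
        rw [sum_comm]
        refine sum_congr rfl fun k _ => sum_congr rfl fun p _ => ?_
        ring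
    _ = N * ∑ j, c j ^ 2 := by
        simp_rw [hinner, mul_ite, mul_zero, sum_ite_eq, mem_univ, if_true, mul_sum]
        exact sum_congr rfl fun j _ => by ring

theorem abs_sub_eq_card_filter_range {x y N : ℕ} (hx : x ≤ N) (hy : y ≤ N) :
    |(x : ℝ) - y| = #{k ∈ range N | ¬(k < x ↔ k < y)} := by
  have : {k ∈ range N | ¬(k < x ↔ k < y)} = Ico (min x y) (max x y) := by
    ext k
    simp only [mem_filter, mem_range, mem_Ico]
    omega
  rw [this, Nat.card_Ico, Nat.cast_sub min_le_max, Nat.cast_max, Nat.cast_min, max_sub_min_eq_abs,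
    abs_sub_comm]

theorem sum_abs_sub_le_mul_of_cut_le {V E : Type*} [Fintype V] [Fintype E] [DecidableEq V]
    (head tail : E → V) {C : ℝ}
    (hcut : ∀ S : Finset V, (#{e | ¬(head e ∈ S ↔ tail e ∈ S)} : ℝ) ≤ C)
    {N : ℕ} (a : V → ℕ) (ha : ∀ v, a v ≤ N) :
    ∑ e, |(a (head e) : ℝ) - a (tail e)| ≤ N * C := by
  calc ∑ e, |(a (head e) : ℝ) - a (tail e)|
      = ∑ k ∈ range N, (#{e | ¬(head e ∈ ({v | k < a v} : Finset V) ↔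
          tail e ∈ ({v | k < a v} : Finset V))} : ℝ) := by
        simp_rw [abs_sub_eq_card_filter_range (ha _) (ha _), ← sum_boole]
        rw [sum_comm]
        simp
    _ ≤ ∑ _k ∈ range N, C := sum_le_sum fun k _ => hcut _
    _ = N * C := by simp

theorem card_filter_add_card_filter_compl {α : Type*} [Fintype α] [DecidableEq α]
    (X : Finset α) (p : α → Prop) [DecidablePred p] :
    #{a ∈ X | p a} + #{a ∈ Xᶜ | p a} = #{a | p a} := by
  rw [← card_union_of_disjoint (disjoint_filter_filter disjoint_compl_right), ← filter_union,
    union_compl]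

theorem sqrt_sum_sq_add_sqrt_sum_sq_le {ι : Type*} [Fintype ι] {a b : ι → ℕ} {s : ℕ}
    (hab : ∀ j, a j + b j = s) :
    √(∑ j, (a j : ℝ) ^ 2) + √(∑ j, (b j : ℝ) ^ 2) ≤ √2 * √(Fintype.card ι) * s := by
  set A := ∑ j, (a j : ℝ) ^ 2
  set B := ∑ j, (b j : ℝ) ^ 2
  have hAB : A + B ≤ Fintype.card ι * (s : ℝ) ^ 2 := by
    calc A + B ≤ ∑ _j : ι, (s : ℝ) ^ 2 := by
          rw [← sum_add_distrib]
          refine sum_le_sum fun j _ => ?_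
          rw [← hab j]
          push_cast
          nlinarith [(a j).cast_nonneg (α := ℝ), (b j).cast_nonneg (α := ℝ)]
      _ = Fintype.card ι * (s : ℝ) ^ 2 := by simp
  have hsq : (√A + √B) ^ 2 ≤ 2 * (A + B) := by
    have hA := Real.sq_sqrt (by positivity : 0 ≤ A)
    have hB := Real.sq_sqrt (by positivity : 0 ≤ B)
    nlinarith [sq_nonneg (√A - √B)]
  calc √A + √B ≤ √(2 * (Fintype.card ι * (s : ℝ) ^ 2)) :=
        Real.le_sqrt_of_sq_le (hsq.trans (by linarith))
    _ = √2 * √(Fintype.card ι) * s := by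
        rw [Real.sqrt_mul zero_le_two, Real.sqrt_mul (Nat.cast_nonneg _),
          Real.sqrt_sq (Nat.cast_nonneg _), mul_assoc]

section Reduction

variable {n m M : ℕ} (head tail : Fin m → Fin n) (Had : Fin M → Fin M → ℝ)

def copyCount (Y : Finset (Fin n × Fin M)) (i : Fin n) : ℕ := #{v ∈ Y | v.1 = i}

/-- The number of vectors of `Y` that carry the codeword `j` on the block of edge `e`. -/
def offEdgeCount (Y : Finset (Fin n × Fin M)) (e : Fin m) (j : Fin M) : ℕ :=
  #{v ∈ Y | v.2 = j ∧ v.1 ≠ head e ∧ v.1 ≠ tail e}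

theorem copyCount_add_copyCount_compl (X : Finset (Fin n × Fin M)) (i : Fin n) :
    copyCount X i + copyCount Xᶜ i = M := by
  rw [copyCount, copyCount, card_filter_add_card_filter_compl]
  have : ({v | v.1 = i} : Finset (Fin n × Fin M)) = {i} ×ˢ univ := by
    ext v
    simp only [mem_filter, mem_univ, true_and, mem_product, mem_singleton, and_true]
  simp [this]

theorem copyCount_le (Y : Finset (Fin n × Fin M)) (i : Fin n) : copyCount Y i ≤ M :=
  (Nat.le_add_right _ _).trans_eq (copyCount_add_copyCount_compl Y i)

theorem offEdgeCount_add_offEdgeCount_compl {e : Fin m} (he : head e ≠ tail e)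
    (X : Finset (Fin n × Fin M)) (j : Fin M) :
    offEdgeCount head tail X e j + offEdgeCount head tail Xᶜ e j = n - 2 := by
  rw [offEdgeCount, offEdgeCount, card_filter_add_card_filter_compl]
  have : ({v | v.2 = j ∧ v.1 ≠ head e ∧ v.1 ≠ tail e} : Finset (Fin n × Fin M))
      = ({head e, tail e}ᶜ : Finset (Fin n)) ×ˢ {j} := by
    ext v
    simp only [mem_filter, mem_univ, true_and, mem_product, mem_compl, mem_insert,
      mem_singleton]
    tauto
  rw [this, card_product, card_singleton, mul_one, card_compl, card_pair he, Fintype.card_fin]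

theorem sum_redVec_eq {e : Fin m} (he : head e ≠ tail e) (Y : Finset (Fin n × Fin M))
    (p : Fin M) :
    ∑ v ∈ Y, redVec head tail Had v.1 v.2 (e, p) =
      ((copyCount Y (head e) : ℝ) - copyCount Y (tail e))
        + ∑ j, (offEdgeCount head tail Y e j : ℝ) * Had j p := by
  have hsplit : ∀ v : Fin n × Fin M, redVec head tail Had v.1 v.2 (e, p) =
      ((if v.1 = head e then 1 else 0) - (if v.1 = tail e then 1 else 0))
        + if v.1 ≠ head e ∧ v.1 ≠ tail e then Had v.2 p else 0 := by
    intro v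
    unfold redVec
    by_cases h₁ : v.1 = head e <;> by_cases h₂ : v.1 = tail e <;> simp_all [eq_comm]
  have hcodeword : ∑ v ∈ Y, (if v.1 ≠ head e ∧ v.1 ≠ tail e then Had v.2 p else 0)
      = ∑ j, (offEdgeCount head tail Y e j : ℝ) * Had j p := by
    rw [← sum_fiberwise Y Prod.snd]
    refine sum_congr rfl fun j _ => ?_
    rw [offEdgeCount, ← sum_boole, sum_mul, sum_filter]
    refine sum_congr rfl fun v _ => ?_
    split_ifs <;> simp_all
  simp_rw [hsplit, sum_add_distrib, sum_sub_distrib, sum_boole, hcodeword]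
  rfl

theorem sum_abs_sum_redVec_le (hHpm : ∀ j p, Had j p = 1 ∨ Had j p = -1)
    (hHorth : ∀ j k, j ≠ k → ∑ p, Had j p * Had k p = 0) {e : Fin m} (he : head e ≠ tail e)
    (Y : Finset (Fin n × Fin M)) :
    ∑ p, |∑ v ∈ Y, redVec head tail Had v.1 v.2 (e, p)| ≤
      M * |(copyCount Y (head e) : ℝ) - copyCount Y (tail e)|
        + M * √(∑ j, (offEdgeCount head tail Y e j : ℝ) ^ 2) := by
  set Δ := (copyCount Y (head e) : ℝ) - copyCount Y (tail e)
  set c : Fin M → ℝ := fun j => offEdgeCount head tail Y e j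
  have hnorm : ∀ j, ∑ p, Had j p * Had j p = M := fun j => by
    have hsq : ∀ p, Had j p * Had j p = 1 := fun p => by
      rcases hHpm j p with h | h <;> rw [h] <;> norm_num
    simp [hsq]
  calc ∑ p, |∑ v ∈ Y, redVec head tail Had v.1 v.2 (e, p)|
      ≤ ∑ p, (|Δ| + |∑ j, c j * Had j p|) :=
        sum_le_sum fun p _ => (sum_redVec_eq head tail Had he Y p).symm ▸ abs_add_le _ _
    _ ≤ M * |Δ| + √(M * ∑ p, (∑ j, c j * Had j p) ^ 2) := by
        rw [sum_add_distrib]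
        simpa using sum_abs_le_sqrt_card_mul_sum_sq univ fun p => ∑ j, c j * Had j p
    _ = M * |Δ| + M * √(∑ j, c j ^ 2) := by
        rw [sum_sq_sum_mul_eq_of_orthogonal Had hnorm hHorth, ← mul_assoc,
          Real.sqrt_mul (mul_self_nonneg _), Real.sqrt_mul_self (Nat.cast_nonneg _)]

theorem sum_abs_add_sum_abs_compl_le (hHpm : ∀ j p, Had j p = 1 ∨ Had j p = -1)
    (hHorth : ∀ j k, j ≠ k → ∑ p, Had j p * Had k p = 0) {e : Fin m} (he : head e ≠ tail e)
    (X : Finset (Fin n × Fin M)) :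
    ∑ p, |∑ v ∈ X, redVec head tail Had v.1 v.2 (e, p)|
        + ∑ p, |∑ v ∈ Xᶜ, redVec head tail Had v.1 v.2 (e, p)| ≤
      2 * M * |(copyCount X (head e) : ℝ) - copyCount X (tail e)|
        + √2 * ((n : ℝ) - 2) * (M : ℝ) ^ ((3 : ℝ) / 2) := by
  have hΔ : |(copyCount Xᶜ (head e) : ℝ) - copyCount Xᶜ (tail e)|
      = |(copyCount X (head e) : ℝ) - copyCount X (tail e)| := by
    have hh := copyCount_add_copyCount_compl X (head e)
    have ht := copyCount_add_copyCount_compl X (tail e)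
    rw [← abs_neg]
    congr 1
    push_cast [← Nat.cast_inj (R := ℝ)] at hh ht
    linarith
  have hcodewords := sqrt_sum_sq_add_sqrt_sum_sq_le
    (offEdgeCount_add_offEdgeCount_compl head tail he X)
  have hn : 2 ≤ n := by
    simpa [card_pair he] using card_le_univ ({head e, tail e} : Finset (Fin n))
  have hM : (M : ℝ) ^ ((3 : ℝ) / 2) = M * √M := by
    rw [show (3 : ℝ) / 2 = 1 + 1 / 2 by norm_num, Real.rpow_add' (Nat.cast_nonneg _) (by norm_num),
      Real.rpow_one, Real.sqrt_eq_rpow]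
  rw [Nat.cast_sub hn, Fintype.card_fin] at hcodewords
  push_cast at hcodewords
  calc _ ≤ (M * |(copyCount X (head e) : ℝ) - copyCount X (tail e)|
          + M * √(∑ j, (offEdgeCount head tail X e j : ℝ) ^ 2))
        + (M * |(copyCount X (head e) : ℝ) - copyCount X (tail e)|
          + M * √(∑ j, (offEdgeCount head tail Xᶜ e j : ℝ) ^ 2)) :=
        add_le_add (sum_abs_sum_redVec_le head tail Had hHpm hHorth he X)
          (hΔ ▸ sum_abs_sum_redVec_le head tail Had hHpm hHorth he Xᶜ)
    _ = 2 * M * |(copyCount X (head e) : ℝ) - copyCount X (tail e)|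
        + M * (√(∑ j, (offEdgeCount head tail X e j : ℝ) ^ 2)
          + √(∑ j, (offEdgeCount head tail Xᶜ e j : ℝ) ^ 2)) := by ring
    _ ≤ 2 * M * |(copyCount X (head e) : ℝ) - copyCount X (tail e)|
        + M * (√2 * √M * ((n : ℝ) - 2)) := by gcongr
    _ = _ := by rw [hM]; ring

end Reduction

theorem no_instance_bound (n m M c : ℕ) (head tail : Fin m → Fin n)
    (hsimple : ∀ e, head e ≠ tail e)
    (Had : Fin M → Fin M → ℝ)
    (hHpm : ∀ j p, Had j p = 1 ∨ Had j p = -1)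
    (hHorth : ∀ j k, j ≠ k → ∑ p, Had j p * Had k p = 0)
    (hnocut : ∀ S : Finset (Fin n),
      ((Finset.univ.filter
          (fun e : Fin m => ¬ (head e ∈ S ↔ tail e ∈ S))).card : ℝ) ≤ (c : ℝ) - 1) :
    ∀ X : Finset (Fin n × Fin M),
      h2sValue head tail Had X
        ≤ 2 * (M : ℝ) ^ 2 * ((c : ℝ) - 1)
          + Real.sqrt 2 * ((n : ℝ) - 2) * (m : ℝ) * (M : ℝ) ^ ((3 : ℝ) / 2) := by
  intro X
  have hcut := sum_abs_sub_le_mul_of_cut_le head tail hnocut (copyCount X) (copyCount_le X)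
  calc h2sValue head tail Had X
      = ∑ e, (∑ p, |∑ v ∈ X, redVec head tail Had v.1 v.2 (e, p)|
          + ∑ p, |∑ v ∈ Xᶜ, redVec head tail Had v.1 v.2 (e, p)|) := by
        rw [h2sValue, Fintype.sum_prod_type, Fintype.sum_prod_type, sum_add_distrib]
    _ ≤ ∑ e, (2 * M * |(copyCount X (head e) : ℝ) - copyCount X (tail e)|
          + √2 * ((n : ℝ) - 2) * (M : ℝ) ^ ((3 : ℝ) / 2)) :=
        sum_le_sum fun e _ =>
          sum_abs_add_sum_abs_compl_le head tail Had hHpm hHorth (hsimple e) X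
    _ = 2 * M * ∑ e, |(copyCount X (head e) : ℝ) - copyCount X (tail e)|
          + √2 * ((n : ℝ) - 2) * m * (M : ℝ) ^ ((3 : ℝ) / 2) := by
        rw [sum_add_distrib, ← mul_sum]
        simp only [sum_const, card_univ, Fintype.card_fin, nsmul_eq_mul]
        ring
    _ ≤ _ := by
        rw [sq, mul_assoc 2, mul_assoc 2, mul_assoc (M : ℝ)]
        gcongr
end
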